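/- arXiv:2404.13088 — 2 statements merged into one kernel-verified Lean document; each statement's English description precedes it below -/
import Mathlib

section
/- Let A be an n×n real matrix, j an observation index, and i a coordinate index. The i-th coordinate x_i of an initial state x ∈ ℝⁿ is uniquely determined by the infinite observation sequence s_k = (A^k x)_j (k ≥ 0) if and only if every vector v in the kernel of M_{n,j} satisfies v_i = 0. -/
/-- The observability matrix `M_{t,j}`: its `k`-th row is the `j`-th row of `A^k`. -/
def obsM {n : ℕ} (A : Matrix (Fin n) (Fin n) ℝ) (t : ℕ) (j : Fin n) :
    Matrix (Fin t) (Fin n) ℝ :=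
  Matrix.of fun k i => (A ^ (k : ℕ)) j i

/-! By Cayley–Hamilton every power `A ^ k` is a linear combination of `A ^ m` with
`m < n`, so the observations `(A ^ k v) j` for `k < n` control all of them: the kernel of
`M_{n,j}` consists exactly of the states whose whole observation sequence vanishes. Since the
observations are linear in the state, `x i` is determined by them iff it vanishes on
this kernel. -/

open Matrix Polynomial

namespace Matrix

variable {R ι : Type*} [CommRing R] [Nontrivial R] [Fintype ι] [DecidableEq ι]

theorem pow_eq_sum_range_card_smul_pow (A : Matrix ι ι R) [Nonempty ι] (k : ℕ) :
    A ^ k = ∑ m ∈ Finset.range (Fintype.card ι),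
      (X ^ k %ₘ A.charpoly).coeff m • A ^ m := by
  have hdeg : A.charpoly.natDegree = Fintype.card ι := A.charpoly_natDegree_eq_dim
  have hne_one : A.charpoly ≠ 1 := fun h => by
    simp [h, eq_comm] at hdeg
  rw [pow_eq_aeval_mod_charpoly, aeval_eq_sum_range']
  exact hdeg ▸ natDegree_modByMonic_lt _ A.charpoly_monic hne_one

theorem pow_mulVec_apply_eq_zero_of_forall_lt_card {A : Matrix ι ι R} {v : ι → R} {j : ι}
    (h : ∀ k < Fintype.card ι, (A ^ k *ᵥ v) j = 0) (k : ℕ) : (A ^ k *ᵥ v) j = 0 := by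
  have : Nonempty ι := ⟨j⟩
  rw [pow_eq_sum_range_card_smul_pow, sum_mulVec, Finset.sum_apply]
  refine Finset.sum_eq_zero fun m hm => ?_
  rw [smul_mulVec, Pi.smul_apply, h m (Finset.mem_range.mp hm), smul_zero]

end Matrix

theorem obsM_mulVec_apply {n : ℕ} (A : Matrix (Fin n) (Fin n) ℝ) (t : ℕ) (j : Fin n)
    (v : Fin n → ℝ) (k : Fin t) : (obsM A t j *ᵥ v) k = (A ^ (k : ℕ) *ᵥ v) j := rfl

theorem obsM_mulVec_eq_zero_iff {n : ℕ} (A : Matrix (Fin n) (Fin n) ℝ) (j : Fin n)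
    (v : Fin n → ℝ) : obsM A n j *ᵥ v = 0 ↔ ∀ k : ℕ, (A ^ k *ᵥ v) j = 0 := by
  refine ⟨fun hv => pow_mulVec_apply_eq_zero_of_forall_lt_card fun k hk => ?_,
    fun hv => funext fun k => hv k⟩
  simpa [obsM_mulVec_apply] using congrFun hv ⟨k, by simpa using hk⟩

/-- Coordinate `i` of the initial state is uniquely determined by the infinite observation
sequence `s_k = (A^k x)_j` iff every kernel vector of `M_{n,j}` vanishes at coordinate `i`. -/
theorem unique_coord_iff_regular_node {n : ℕ} (A : Matrix (Fin n) (Fin n) ℝ)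
    (j i : Fin n) :
    (∀ x y : Fin n → ℝ,
        (∀ k : ℕ, ((A ^ k).mulVec x) j = ((A ^ k).mulVec y) j) → x i = y i) ↔
      (∀ v : Fin n → ℝ, (obsM A n j).mulVec v = 0 → v i = 0) := by
  simp only [obsM_mulVec_eq_zero_iff]
  constructor
  · intro hdet v hv
    simpa using hdet v 0 fun k => by simpa using hv k
  · intro hker x y hobs
    have hdiff := hker (x - y) fun k => by simp [mulVec_sub, hobs k]
    simpa [sub_eq_zero] using hdiff
end

section
/- Let G be a directed graph on n nodes and suppose S ⊆ {1,...,n} satisfies |S| > |S→| (a bottleneck), where S→ is the forward set of S. Then for any matrix A respecting the structure of G, there exists a nonzero vector v with support contained in S such that Av = 0. Consequently, for any observation node j ∉ S, v lies in the null space of every observability matrix M_{t,j}, so some node in S is a kernel node of M_{t,j} and cannot be reconstructed from observations at node j. -/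
open Matrix

/-- If `S` is a bottleneck (`|S→| < |S|`) of a directed graph, then for any matrix `A`
respecting the graph structure there is a nonzero null vector `v` of `A` supported in `S`;
for any observation node `j ∉ S`, `v` lies in the kernel of every observability matrix
`M_{t,j}`, and some node of `S` is a kernel node of `M_{t,j}`. -/
theorem bottleneck_gives_kernel_node {n : ℕ} (E : Fin n → Fin n → Prop) [DecidableRel E]
    (S : Finset (Fin n))
    (hcard : (Finset.univ.filter (fun w => ∃ u ∈ S, E u w)).card < S.card)
    (A : Matrix (Fin n) (Fin n) ℝ)
    (hA : ∀ w u : Fin n, A w u ≠ 0 → E u w) :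
    ∃ v : Fin n → ℝ, v ≠ 0 ∧ (∀ i : Fin n, v i ≠ 0 → i ∈ S) ∧ A.mulVec v = 0 ∧
      (∃ i ∈ S, v i ≠ 0) ∧
      ∀ j : Fin n, j ∉ S → ∀ t : ℕ, (obsM A t j).mulVec v = 0 := by
  classical
  set T := Finset.univ.filter (fun w => ∃ u ∈ S, E u w) with hT
  -- restricted matrix
  set B : Matrix T S ℝ := fun w u => A w u with hB
  have hfr : Module.finrank ℝ (T → ℝ) < Module.finrank ℝ (S → ℝ) := by
    simpa [Module.finrank_fintype_fun_eq_card] using hcard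
  have hker : LinearMap.ker B.mulVecLin ≠ ⊥ :=
    LinearMap.ker_ne_bot_of_finrank_lt hfr
  obtain ⟨w, hwker, hw0⟩ := Submodule.exists_mem_ne_zero_of_ne_bot hker
  have hBw : B.mulVec w = 0 := hwker
  set v : Fin n → ℝ := fun i => if h : i ∈ S then w ⟨i, h⟩ else 0 with hv
  have hsupp : ∀ i : Fin n, v i ≠ 0 → i ∈ S := by
    intro i hi
    by_contra h
    simp [hv, h] at hi
  have hvS : ∀ (i : Fin n) (h : i ∈ S), v i = w ⟨i, h⟩ := by
    intro i h; simp [hv, h]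
  obtain ⟨u0, hu0⟩ : ∃ u : S, w u ≠ 0 := by
    by_contra h
    push_neg at h
    exact hw0 (funext fun u => h u)
  have hv0 : v (u0 : Fin n) ≠ 0 := by
    rw [hvS _ u0.2]; simpa using hu0
  have hvne : v ≠ 0 := fun h => hv0 (by simp [h])
  have hAv : A.mulVec v = 0 := by
    funext i
    by_cases hi : i ∈ T
    · have := congrFun hBw ⟨i, hi⟩
      simp only [Matrix.mulVec, dotProduct, Pi.zero_apply] at this ⊢
      rw [← this]
      have hrhs : ∑ x : S, B ⟨i, hi⟩ x * w x = ∑ x ∈ S, A i x * v x := by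
        rw [← Finset.sum_coe_sort S (fun u => A i u * v u)]
        exact Finset.sum_congr rfl fun x _ => by rw [hvS x x.2]
      have hlhs : ∑ x : Fin n, A i x * v x = ∑ x ∈ S, A i x * v x := by
        refine (Finset.sum_subset (Finset.subset_univ S) ?_).symm
        intro x _ hx
        have : v x = 0 := by by_contra h; exact hx (hsupp x h)
        simp [this]
      rw [hlhs, hrhs]
    · simp only [Matrix.mulVec, dotProduct, Pi.zero_apply]
      apply Finset.sum_eq_zero
      intro u _
      rcases eq_or_ne (v u) 0 with h | h
      · simp [h]
      · have huS := hsupp u h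
        rcases eq_or_ne (A i u) 0 with h2 | h2
        · simp [h2]
        · exact absurd (by simp [hT]; exact ⟨u, huS, hA i u h2⟩) hi
  have hpow : ∀ k : ℕ, 1 ≤ k → (A ^ k).mulVec v = 0 := by
    intro k hk
    obtain ⟨m, rfl⟩ := Nat.exists_eq_add_of_le hk
    rw [add_comm, pow_succ, ← Matrix.mulVec_mulVec, hAv]
    simp
  refine ⟨v, hvne, hsupp, hAv, ⟨u0, u0.2, hv0⟩, ?_⟩
  intro j hj t
  funext k
  simp only [Matrix.mulVec, dotProduct, Pi.zero_apply, obsM, Matrix.of_apply]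
  rcases Nat.eq_zero_or_pos (k : ℕ) with h0 | hpos
  · rw [h0]
    have hvj : v j = 0 := by
      by_contra h; exact hj (hsupp j h)
    simp [Matrix.one_apply, hvj, Finset.sum_ite_eq, Finset.sum_ite_eq']
  · have := congrFun (hpow k hpos) j
    simpa [Matrix.mulVec, dotProduct] using this
end
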